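/- Let (R, m) be a Noetherian local ring. If R is S_2 and the normalization map R → R^ν is bijective on prime spectra and an isomorphism at all height-1 primes, then any finite birational extension R ⊂ R' inside the total ring of fractions with R' = R at all height-1 primes satisfies R' = R. -/

import Mathlib

open IsLocalRing

universe u

/-- A Noetherian local ring has depth `≥ n` if there is a regular sequence of length `n`
contained in the maximal ideal. -/
def HasDepthGE (R : Type*) [CommRing R] [IsLocalRing R] (n : ℕ) : Prop :=
  ∃ rs : List R, rs.length = n ∧ (∀ x ∈ rs, x ∈ maximalIdeal R) ∧
    RingTheory.Sequence.IsRegular R rs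

/-- A local ring satisfies Serre's condition `S_2` if its depth is at least
`min(2, dim)`. -/
def IsS2Local (R : Type*) [CommRing R] [IsLocalRing R] : Prop :=
  ∀ n : ℕ, (n : WithBot ℕ∞) ≤ min 2 (ringKrullDim R) → HasDepthGE R n

/-- A subset `S` of the total ring of fractions agrees with `R` at the prime `p`:
every element of `S` becomes an element of (the image of) `R` after multiplying by
some element outside `p`. -/
def AgreesWithBaseAt (R : Type u) [CommRing R] (p : Ideal R)
    (S : Set (FractionRing R)) : Prop :=
  ∀ x ∈ S, ∃ (r s : R), s ∉ p ∧
    algebraMap R (FractionRing R) s * x = algebraMap R (FractionRing R) r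

/-!
Let `x ∈ R'` and write `x = ρ / s` with `s` a nonzerodivisor. The ideal of denominators
`I = (sR : ρ)` lies in no prime `p` with `dim R_p ≤ 1`, because `R'` agrees with `R` there. If
`x ∉ R`, then `I` is proper, and at a minimal prime `p` over `I` we get `depth R_p ≥ 2` while
`I R_p` contains a power of `𝔪 = p R_p`. A regular sequence `a, b` in `𝔪` shows that `𝔪 c ⊆ s R_p`
forces `c ∈ s R_p`; descending through the powers of `𝔪` gives `ρ ∈ s R_p`. Hence some `w ∉ p`
lies in `I`, a contradiction.
-/

open scoped Pointwise nonZeroDivisors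

theorem two_le_of_not_le_one {d : WithBot ℕ∞} (h : ¬ d ≤ 1) : ((2 : ℕ) : WithBot ℕ∞) ≤ d := by
  induction d using WithBot.recBotCoe with
  | bot => simp at h
  | coe d =>
    exact WithBot.coe_le_coe.2 (Order.add_one_le_of_lt (WithBot.coe_lt_coe.1 (not_le.1 h)))

section Regular

variable {A : Type*} [CommRing A]

theorem mem_span_singleton_of_isWeaklyRegular_pair {x y σ b : A}
    (hxy : RingTheory.Sequence.IsWeaklyRegular A [x, y]) (hσ : σ ∈ A⁰)
    (hxb : x * b ∈ Ideal.span {σ}) (hyb : y * b ∈ Ideal.span {σ}) :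
    b ∈ Ideal.span {σ} := by
  simp only [RingTheory.Sequence.isWeaklyRegular_cons_iff,
    RingTheory.Sequence.IsWeaklyRegular.nil, and_true] at hxy
  obtain ⟨hx, hy⟩ := hxy
  obtain ⟨c, hc⟩ := Ideal.mem_span_singleton'.1 hxb
  obtain ⟨d, hd⟩ := Ideal.mem_span_singleton'.1 hyb
  have hyc : y * c = x * d := by
    refine sub_eq_zero.1 ((mul_right_mem_nonZeroDivisors_eq_zero_iff hσ).1 ?_)
    linear_combination y * hc - x * hd
  have hx_smul_top : x • (⊤ : Ideal A) = Ideal.span {x} := by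
    rw [← Submodule.ideal_span_singleton_smul, Ideal.smul_eq_mul, Ideal.mul_top]
  have hcx : c ∈ Ideal.span {x} := by
    rw [← hx_smul_top]
    refine mem_of_isSMulRegular_quotient_of_smul_mem hy ?_
    rw [smul_eq_mul, hyc, hx_smul_top]
    exact Ideal.mul_mem_right _ _ (Ideal.mem_span_singleton_self x)
  obtain ⟨e, rfl⟩ := Ideal.mem_span_singleton'.1 hcx
  exact Ideal.mem_span_singleton'.2 ⟨e, hx (by simp only [smul_eq_mul]; linear_combination hc)⟩

theorem Submodule.mem_of_pow_le_colon {M : Type*} [AddCommGroup M] [Module A M]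
    {I : Ideal A} {N : Submodule A M} (hI : ∀ b, I ≤ N.colon {b} → b ∈ N) :
    ∀ (k : ℕ) (b : M), I ^ k ≤ N.colon {b} → b ∈ N
  | 0, b, h => by simpa using h (show (1 : A) ∈ I ^ 0 by simp)
  | k + 1, b, h => Submodule.mem_of_pow_le_colon hI k b fun r hr => by
      refine Submodule.mem_colon_singleton.2 (hI _ fun t ht => ?_)
      rw [Submodule.mem_colon_singleton, smul_smul]
      exact Submodule.mem_colon_singleton.1 (h (by rw [pow_succ']; exact Ideal.mul_mem_mul ht hr))

theorem IsLocalRing.radical_eq_maximalIdeal_of_mem_minimalPrimes [IsLocalRing A] {J : Ideal A}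
    (hJ : maximalIdeal A ∈ J.minimalPrimes) : J.radical = maximalIdeal A := by
  rw [← Ideal.sInf_minimalPrimes]
  refine le_antisymm (sInf_le hJ) (le_sInf fun q hq => ?_)
  exact hJ.2 hq.1 (le_maximalIdeal hq.1.1.ne_top)


theorem HasDepthGE.mem_span_singleton_of_le_colon [IsLocalRing A] [IsNoetherianRing A]
    (h : HasDepthGE A 2) {J : Ideal A} (hJ : maximalIdeal A ∈ J.minimalPrimes) {σ a : A}
    (hσ : σ ∈ A⁰) (hJa : J ≤ (Ideal.span {σ}).colon {a}) : a ∈ Ideal.span {σ} := by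
  obtain ⟨_, hlen, hmem, hreg⟩ := h
  obtain ⟨x, y, rfl⟩ := List.length_eq_two.1 hlen
  have hm : ∀ b, maximalIdeal A ≤ (Ideal.span {σ}).colon {b} → b ∈ Ideal.span {σ} :=
    fun b hb => mem_span_singleton_of_isWeaklyRegular_pair hreg.toIsWeaklyRegular hσ
      (Submodule.mem_colon_singleton.1 (hb (hmem x (by simp))))
      (Submodule.mem_colon_singleton.1 (hb (hmem y (by simp))))
  obtain ⟨k, hk⟩ := Ideal.exists_pow_le_of_le_radical_of_fg
    (IsLocalRing.radical_eq_maximalIdeal_of_mem_minimalPrimes hJ).ge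
    (IsNoetherian.noetherian (maximalIdeal A))
  exact Submodule.mem_of_pow_le_colon hm k a (hk.trans hJa)

end Regular

theorem not_hasDepthGE_two_of_mem_minimalPrimes_colon {R : Type*} [CommRing R]
    [IsNoetherianRing R] {s ρ : R} (hs : s ∈ R⁰) {p : Ideal R} [p.IsPrime]
    (hp : p ∈ ((Ideal.span {s}).colon {ρ}).minimalPrimes) :
    ¬ HasDepthGE (Localization.AtPrime p) 2 := by
  intro hdepth
  set ψ := algebraMap R (Localization.AtPrime p)
  have hmin : maximalIdeal _ ∈ (((Ideal.span {s}).colon {ρ}).map ψ).minimalPrimes := by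
    rw [IsLocalization.minimalPrimes_map p.primeCompl, Set.mem_preimage,
      IsLocalization.AtPrime.under_maximalIdeal (Localization.AtPrime p) p]
    exact hp
  have hmap : ((Ideal.span {s}).colon {ρ}).map ψ ≤ (Ideal.span {ψ s}).colon {ψ ρ} := by
    refine Ideal.map_le_iff_le_comap.2 fun r hr => ?_
    rw [Ideal.mem_comap, Submodule.mem_colon_singleton, smul_eq_mul, ← map_mul,
      ← Set.image_singleton, ← Ideal.map_span]
    exact Ideal.mem_map_of_mem _ (Submodule.mem_colon_singleton.1 hr)
  have hρ := hdepth.mem_span_singleton_of_le_colon hmin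
    (IsLocalization.map_nonZeroDivisors_le p.primeCompl _ ⟨s, hs, rfl⟩) hmap
  rw [← Set.image_singleton, ← Ideal.map_span,
    IsLocalization.algebraMap_mem_map_algebraMap_iff p.primeCompl] at hρ
  obtain ⟨w, hw, hwρ⟩ := hρ
  exact hw (hp.1.2 (Submodule.mem_colon_singleton.2 hwρ))

theorem colon_one_singleton_eq {R K : Type*} [CommRing R] [CommRing K] [Algebra R K]
    [IsFractionRing R K] {x : K} {ρ s : R} (hs : s ∈ R⁰)
    (hx : x * algebraMap R K s = algebraMap R K ρ) :
    (1 : Submodule R K).colon {x} = (Ideal.span {s}).colon {ρ} := by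
  ext r
  simp only [Submodule.mem_colon_singleton, Submodule.mem_one, smul_eq_mul,
    Ideal.mem_span_singleton', Algebra.smul_def]
  refine ⟨fun ⟨a, ha⟩ => ⟨a, IsFractionRing.injective R K ?_⟩,
    fun ⟨a, ha⟩ => ⟨a, (IsLocalization.map_units K ⟨s, hs⟩).mul_left_inj.1 ?_⟩⟩
  · rw [map_mul, map_mul, ha, ← hx, mul_assoc]
  · rw [← map_mul, ha, map_mul, ← hx, mul_assoc]

theorem AgreesWithBaseAt.not_colon_le {R : Type u} [CommRing R] {p : Ideal R}
    {S : Set (FractionRing R)} (h : AgreesWithBaseAt R p S) {x : FractionRing R} (hx : x ∈ S) :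
    ¬ (1 : Submodule R (FractionRing R)).colon {x} ≤ p := fun hle => by
  obtain ⟨r, s, hs, hsx⟩ := h x hx
  exact hs (hle (Submodule.mem_colon_singleton.2 (by
    rw [Algebra.smul_def, hsx]
    exact Submodule.algebraMap_mem r)))

theorem finite_birational_extension_eq_of_S2_general
    (R : Type u) [CommRing R] [IsNoetherianRing R]
    (hS2 : ∀ (p : Ideal R) [p.IsPrime], IsS2Local (Localization.AtPrime p))
    (R' : Subalgebra R (FractionRing R))
    (hR'ht1 : ∀ (p : Ideal R) [p.IsPrime],
      ringKrullDim (Localization.AtPrime p) ≤ 1 →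
      AgreesWithBaseAt R p (R' : Set (FractionRing R))) :
    R' = ⊥ := by
  refine eq_bot_iff.2 fun x hxR' => by_contra fun hx => ?_
  obtain ⟨⟨ρ, s⟩, hρs⟩ := IsLocalization.surj R⁰ x
  have hI := colon_one_singleton_eq (K := FractionRing R) s.2 hρs
  have hIne : (Ideal.span {(s : R)}).colon {ρ} ≠ ⊤ := by
    rw [← hI, Ne, Ideal.eq_top_iff_one, Submodule.mem_colon_singleton, one_smul,
      Submodule.mem_one]
    exact fun ⟨a, ha⟩ => hx ⟨a, ha⟩
  obtain ⟨p, hp⟩ := Ideal.nonempty_minimalPrimes hIne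
  have := hp.1.1
  have hdim : ¬ ringKrullDim (Localization.AtPrime p) ≤ 1 := fun h =>
    (hR'ht1 p h).not_colon_le hxR' (hI ▸ hp.1.2)
  exact not_hasDepthGE_two_of_mem_minimalPrimes_colon s.2 hp
    (hS2 p 2 (le_min le_rfl (two_le_of_not_le_one hdim)))

/-- Let `(R, m)` be a reduced Noetherian local ring. If `R` is `S_2` and the
normalization map `R → R^ν` is bijective on prime spectra and an isomorphism at all
height-1 primes, then any finite birational extension `R ⊆ R'` inside the total ring of
fractions with `R' = R` at all height-1 primes satisfies `R' = R` (i.e. `R' = ⊥` as a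
subalgebra of `Frac R`). -/
theorem finite_birational_extension_eq_of_S2
    (R : Type u) [CommRing R] [IsLocalRing R] [IsNoetherianRing R] [IsReduced R]
    (hS2 : ∀ (p : Ideal R) [p.IsPrime], IsS2Local (Localization.AtPrime p))
    (hνbij : Function.Bijective
      (PrimeSpectrum.comap (algebraMap R (integralClosure R (FractionRing R)))))
    (hνht1 : ∀ (p : Ideal R) [p.IsPrime],
      ringKrullDim (Localization.AtPrime p) ≤ 1 →
      AgreesWithBaseAt R p (integralClosure R (FractionRing R) : Set (FractionRing R)))
    (R' : Subalgebra R (FractionRing R)) (hfin : R'.toSubmodule.FG)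
    (hR'ht1 : ∀ (p : Ideal R) [p.IsPrime],
      ringKrullDim (Localization.AtPrime p) ≤ 1 →
      AgreesWithBaseAt R p (R' : Set (FractionRing R))) :
    R' = ⊥ :=
  finite_birational_extension_eq_of_S2_general R hS2 R' hR'ht1
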